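/- For every n ≥ 3, the star graph K_{1,n−1} satisfies IC(K_{1,n−1}) = 3. -/

import Mathlib

namespace ICNL

variable {V : Type*}

/-- `S` is a dominating set of `G`. -/
def Dominating (G : SimpleGraph V) (S : Set V) : Prop :=
  ∀ v : V, v ∈ S ∨ ∃ u ∈ S, G.Adj u v

/-- `S` is an independent set of `G`. -/
def IndepSet (G : SimpleGraph V) (S : Set V) : Prop :=
  ∀ ⦃u : V⦄, u ∈ S → ∀ ⦃v : V⦄, v ∈ S → ¬ G.Adj u v

/-- `S` is an independent dominating set of `G`. -/
def IndepDom (G : SimpleGraph V) (S : Set V) : Prop :=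
  IndepSet G S ∧ Dominating G S

/-- `A` and `B` form an independent coalition in `G`. -/
def ICCoalition (G : SimpleGraph V) (A B : Set V) : Prop :=
  Disjoint A B ∧ IndepSet G A ∧ IndepSet G B ∧
    ¬ IndepDom G A ∧ ¬ IndepDom G B ∧ IndepDom G (A ∪ B)

/-- `π` is a partition of the vertex set into nonempty classes. -/
def IsPartition (π : Finset (Finset V)) : Prop :=
  (∀ A ∈ π, A.Nonempty) ∧ ∀ v : V, ∃! A : Finset V, A ∈ π ∧ v ∈ A

/-- `π` is an independent coalition partition of `G`. -/
def IsICPartition (G : SimpleGraph V) (π : Finset (Finset V)) : Prop :=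
  IsPartition π ∧
    ∀ A ∈ π, (∃ v : V, (A : Set V) = {v} ∧ Dominating G (A : Set V)) ∨
      (¬ IndepDom G (A : Set V) ∧
        ∃ B ∈ π, B ≠ A ∧ ICCoalition G (A : Set V) (B : Set V))

/-- The independent coalition number: the maximum number of classes of an
ic-partition of `G`. -/
noncomputable def IC (G : SimpleGraph V) : ℕ :=
  sSup {k | ∃ π : Finset (Finset V), IsICPartition G π ∧ π.card = k}


/-- The star graph `K_{1,n-1}` on `n` vertices: the vertex `0` is the center,
adjacent to the `n - 1` leaves, and there are no other edges. -/
def starGraph (n : ℕ) : SimpleGraph (Fin n) :=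
  SimpleGraph.fromRel (fun u _ => (u : ℕ) = 0)

/-
Every class of an ic-partition is independent, so the class of the center is the center alone;
being an independent dominating set, it lies in no coalition. A leaf class cannot be a
dominating singleton (there are two leaves), so it has a coalition partner, again a set of
leaves; their union dominates without containing the center, hence contains every leaf. So
there are at most three classes, and `{c}`, `{a}` and the remaining leaves form an ic-partition
with three.
-/

lemma indepSet_singleton (G : SimpleGraph V) (v : V) : IndepSet G {v} := by
  rintro u rfl w rfl
  exact G.irrefl

lemma IndepSet.eq_singleton {G : SimpleGraph V} {S : Set V} {c : V} (hS : IndepSet G S)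
    (hc : c ∈ S) (hadj : ∀ v, v ≠ c → G.Adj c v) : S = {c} :=
  Set.eq_singleton_iff_unique_mem.2
    ⟨hc, fun v hv => by_contra fun hvc => hS hc hv (hadj v hvc)⟩

lemma ICCoalition.symm {G : SimpleGraph V} {A B : Set V} (h : ICCoalition G A B) :
    ICCoalition G B A := by
  obtain ⟨hdisj, hA, hB, hnA, hnB, hAB⟩ := h
  exact ⟨hdisj.symm, hB, hA, hnB, hnA, Set.union_comm A B ▸ hAB⟩

lemma IsPartition.eq_of_mem {π : Finset (Finset V)} (hπ : IsPartition π) {A B : Finset V}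
    {v : V} (hA : A ∈ π) (hB : B ∈ π) (hvA : v ∈ A) (hvB : v ∈ B) : A = B :=
  (hπ.2 v).unique ⟨hA, hvA⟩ ⟨hB, hvB⟩

lemma IsPartition.subset_of_forall_exists {π s : Finset (Finset V)} (hπ : IsPartition π)
    (hs : ∀ v, ∃ A ∈ s, A ∈ π ∧ v ∈ A) : π ⊆ s := by
  intro C hC
  obtain ⟨w, hwC⟩ := hπ.1 C hC
  obtain ⟨A, hAs, hA, hwA⟩ := hs w
  exact hπ.eq_of_mem hC hA hwC hwA ▸ hAs

lemma isPartition_of_pairwiseDisjoint {π : Finset (Finset V)} (hne : ∀ A ∈ π, A.Nonempty)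
    (hdisj : (π : Set (Finset V)).PairwiseDisjoint id) (hcover : ∀ v, ∃ A ∈ π, v ∈ A) :
    IsPartition π := by
  refine ⟨hne, fun v => ?_⟩
  obtain ⟨A, hA, hvA⟩ := hcover v
  exact ⟨A, ⟨hA, hvA⟩, fun B ⟨hB, hvB⟩ => hdisj.elim_finset hB hA v hvB hvA⟩

lemma IsICPartition.indepSet {G : SimpleGraph V} {π : Finset (Finset V)}
    (hπ : IsICPartition G π) {A : Finset V} (hA : A ∈ π) : IndepSet G (A : Set V) := by
  rcases hπ.2 A hA with ⟨v, hv, -⟩ | ⟨-, B, -, -, hAB⟩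
  · exact hv ▸ indepSet_singleton G v
  · exact hAB.2.1

lemma card_singletons_and_rest [Fintype V] [DecidableEq V] {c a : V} (hca : c ≠ a) :
    ({{c}, {a}, Finset.univ \ {c, a}} : Finset (Finset V)).card = 3 := by
  refine Finset.card_eq_three.2 ⟨_, _, _, ?_, ?_, ?_, rfl⟩
  · simpa using hca
  · exact fun h => by simpa using (h ▸ Finset.mem_singleton_self c : c ∈ Finset.univ \ {c, a})
  · exact fun h => by simpa using (h ▸ Finset.mem_singleton_self a : a ∈ Finset.univ \ {c, a})

lemma IC_eq_of_isGreatest {G : SimpleGraph V} {k : ℕ}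
    (hk : ∃ π : Finset (Finset V), IsICPartition G π ∧ π.card = k)
    (hle : ∀ π : Finset (Finset V), IsICPartition G π → π.card ≤ k) : IC G = k :=
  IsGreatest.csSup_eq ⟨hk, by rintro _ ⟨π, hπ, rfl⟩; exact hle π hπ⟩

def IsStarWithCenter (G : SimpleGraph V) (c : V) : Prop :=
  ∀ u v, G.Adj u v ↔ u ≠ v ∧ (u = c ∨ v = c)

lemma starGraph_isStarWithCenter {n : ℕ} (hn : 0 < n) :
    IsStarWithCenter (starGraph n) ⟨0, hn⟩ := by
  intro u v
  simp [starGraph, Fin.ext_iff]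

namespace IsStarWithCenter

variable {G : SimpleGraph V} {c : V} (hG : IsStarWithCenter G c)
include hG

lemma adj_center {v : V} (hv : v ≠ c) : G.Adj c v :=
  (hG c v).2 ⟨hv.symm, Or.inl rfl⟩

lemma not_adj {u v : V} (hu : u ≠ c) (hv : v ≠ c) : ¬ G.Adj u v := by
  rw [hG]
  tauto

lemma indepSet {S : Set V} (hcS : c ∉ S) : IndepSet G S :=
  fun _ hu _ hv => hG.not_adj (ne_of_mem_of_not_mem hu hcS) (ne_of_mem_of_not_mem hv hcS)

lemma mem_of_dominating {S : Set V} (hcS : c ∉ S) (hS : Dominating G S) {v : V}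
    (hv : v ≠ c) : v ∈ S := by
  rcases hS v with hvS | ⟨u, huS, huv⟩
  · exact hvS
  · exact absurd huv (hG.not_adj (ne_of_mem_of_not_mem huS hcS) hv)

lemma dominating {S : Set V} (hS : ∀ v, v ≠ c → v ∈ S) (hne : S.Nonempty) :
    Dominating G S := by
  intro v
  by_cases hvc : v = c
  · obtain ⟨u, huS⟩ := hne
    by_cases huc : u = c
    · exact Or.inl (hvc ▸ huc ▸ huS)
    · exact Or.inr ⟨u, huS, hvc ▸ (hG.adj_center huc).symm⟩
  · exact Or.inl (hS v hvc)

lemma dominating_singleton_center : Dominating G {c} := by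
  intro v
  by_cases hvc : v = c
  · exact Or.inl hvc
  · exact Or.inr ⟨c, rfl, hG.adj_center hvc⟩

lemma indepDom_singleton_center : IndepDom G {c} :=
  ⟨indepSet_singleton G c, hG.dominating_singleton_center⟩

lemma not_indepDom {S : Set V} (hcS : c ∉ S) {v : V} (hvc : v ≠ c) (hvS : v ∉ S) :
    ¬ IndepDom G S :=
  fun hS => hvS (hG.mem_of_dominating hcS hS.2 hvc)

lemma icCoalition {A B : Set V} (hcA : c ∉ A) (hcB : c ∉ B) (hAB : Disjoint A B)
    (hA : A.Nonempty) (hB : B.Nonempty) (hcover : ∀ v, v ≠ c → v ∈ A ∪ B) :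
    ICCoalition G A B := by
  obtain ⟨a, ha⟩ := hA
  obtain ⟨b, hb⟩ := hB
  have hcAB : c ∉ A ∪ B := by simp [hcA, hcB]
  refine ⟨hAB, hG.indepSet hcA, hG.indepSet hcB, ?_, ?_, hG.indepSet hcAB,
    hG.dominating hcover ⟨a, Or.inl ha⟩⟩
  · exact hG.not_indepDom hcA (ne_of_mem_of_not_mem hb hcB) (hAB.notMem_of_mem_right hb)
  · exact hG.not_indepDom hcB (ne_of_mem_of_not_mem ha hcA) (hAB.notMem_of_mem_left ha)

section Bounds

variable {a b : V} (ha : a ≠ c) (hb : b ≠ c) (hab : a ≠ b)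
include ha hb hab

lemma card_le_three {π : Finset (Finset V)} (hπ : IsICPartition G π) : π.card ≤ 3 := by
  classical
  obtain ⟨C, ⟨hC, hcC⟩, -⟩ := hπ.1.2 c
  have hC_eq : ∀ D ∈ π, c ∈ D → (D : Set V) = {c} := fun D hD hcD =>
    (hπ.indepSet hD).eq_singleton hcD fun _ => hG.adj_center
  obtain ⟨A, ⟨hA, haA⟩, -⟩ := hπ.1.2 a
  have hcA : c ∉ A := fun hcA => by
    have : a ∈ (A : Set V) := haA
    simp [hC_eq A hA hcA, ha] at this
  obtain ⟨B, hB, hAB⟩ : ∃ B ∈ π, ICCoalition G (A : Set V) (B : Set V) := by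
    rcases hπ.2 A hA with ⟨v, hv, hdom⟩ | ⟨-, B, hB, -, hAB⟩
    · obtain ⟨w, hwc, hwv⟩ : ∃ w, w ≠ c ∧ w ≠ v := by
        by_cases hav : a = v
        · exact ⟨b, hb, hav ▸ hab.symm⟩
        · exact ⟨a, ha, hav⟩
      have hcv : c ∉ (A : Set V) := hcA
      have := hG.mem_of_dominating hcv hdom hwc
      simp [hv, hwv] at this
    · exact ⟨B, hB, hAB⟩
  have hcB : c ∉ B := fun hcB => hAB.2.2.2.2.1 (hC_eq B hB hcB ▸ hG.indepDom_singleton_center)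
  have hcover : ∀ v, v ≠ c → v ∈ (A : Set V) ∪ B :=
    fun _ => hG.mem_of_dominating (by simp [hcA, hcB]) hAB.2.2.2.2.2.2
  have hsub : π ⊆ {C, A, B} := hπ.1.subset_of_forall_exists fun v => by
    by_cases hvc : v = c
    · exact ⟨C, by simp, hC, hvc ▸ hcC⟩
    · rcases hcover v hvc with hvA | hvB
      · exact ⟨A, by simp, hA, hvA⟩
      · exact ⟨B, by simp, hB, hvB⟩
  exact (Finset.card_le_card hsub).trans Finset.card_le_three

variable [Fintype V] [DecidableEq V]

lemma isICPartition_singletons_and_rest :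
    IsICPartition G {{c}, {a}, Finset.univ \ {c, a}} := by
  set R : Finset V := Finset.univ \ {c, a} with hR
  have hbR : b ∈ R := by simp [hR, hb, hab.symm]
  have haR : ({a} : Finset V) ≠ R := fun h => by
    simpa [hR] using (h ▸ Finset.mem_singleton_self a : a ∈ R)
  have hcoal : ICCoalition G ({a} : Finset V) (R : Set V) := by
    refine hG.icCoalition (by simpa using ha.symm) (by simp [hR]) (by simp [hR])
      (by simp) ⟨b, hbR⟩ fun v hvc => ?_
    by_cases hva : v = a <;> simp [hR, hva, hvc]
  refine ⟨isPartition_of_pairwiseDisjoint ?_ ?_ fun v => ?_, ?_⟩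
  · simp only [Finset.mem_insert, Finset.mem_singleton]
    rintro A (rfl | rfl | rfl)
    exacts [Finset.singleton_nonempty c, Finset.singleton_nonempty a, ⟨b, hbR⟩]
  · intro X hX Y hY hXY
    simp only [Finset.coe_insert, Finset.coe_singleton, Set.mem_insert_iff,
      Set.mem_singleton_iff] at hX hY
    rcases hX with rfl | rfl | rfl <;> rcases hY with rfl | rfl | rfl <;>
      simp_all [Finset.disjoint_left]
  · by_cases hvc : v = c
    · exact ⟨{c}, by simp, by simp [hvc]⟩
    by_cases hva : v = a
    · exact ⟨{a}, by simp, by simp [hva]⟩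
    · exact ⟨R, by simp, by simp [hR, hvc, hva]⟩
  · simp only [Finset.mem_insert, Finset.mem_singleton]
    rintro A (rfl | rfl | rfl)
    · exact Or.inl ⟨c, by simp, by simpa using hG.dominating_singleton_center⟩
    · exact Or.inr ⟨hcoal.2.2.2.1, R, by simp, haR.symm, hcoal⟩
    · exact Or.inr ⟨hcoal.2.2.2.2.1, {a}, by simp, haR, hcoal.symm⟩

end Bounds

end IsStarWithCenter

theorem stmt_6 (n : ℕ) (hn : 3 ≤ n) : IC (starGraph n) = 3 := by
  have hG := starGraph_isStarWithCenter (n := n) (by omega)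
  have ha : (⟨1, by omega⟩ : Fin n) ≠ ⟨0, by omega⟩ := by simp
  have hb : (⟨2, by omega⟩ : Fin n) ≠ ⟨0, by omega⟩ := by simp
  have hab : (⟨1, by omega⟩ : Fin n) ≠ ⟨2, by omega⟩ := by simp
  exact IC_eq_of_isGreatest
    ⟨_, hG.isICPartition_singletons_and_rest ha hb hab, card_singletons_and_rest ha.symm⟩
    fun _ => hG.card_le_three ha hb hab

end ICNL
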